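/- Let A be a {0,1}-valued n×n matrix with all row and column sums at least 1, and define the 2-marginals of the previous construction for 3-tables of size (n,n,2). A nonnegative integer n×n matrix Σ arises as the slice (x_{i,j,1}) of some 3-table x with these 2-marginals if and only if Σ is the permutation matrix of some permutation σ of {1,...,n} satisfying A_{i,σ(i)} = 1 for all i. -/

import Mathlib

/-!
The first slice `S = (x i j 0)` of a table with these marginals has all row and column sums
equal to `1`, and `S ≤ A` entrywise because the two slices add up to `A`. Conversely every such
`S` is a first slice: take `A - S` as the second slice, whose line sums are then those of `A`
minus `1`. A nonnegative integer matrix with all line sums `1` is a permutation matrix, and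
`S ≤ A` for the permutation matrix of `σ` says exactly that `A i (σ i) = 1` when `A` is `{0,1}`.
-/

open Finset

section

variable {ι : Type*} [Fintype ι]

theorem exists_table_with_marginals_iff (A S : ι → ι → ℕ) :
    (∃ x : ι → ι → Fin 2 → ℕ,
      (∀ i j, ∑ k, x i j k = A i j) ∧
      (∀ i, ∑ j, x i j 0 = 1) ∧
      (∀ j, ∑ i, x i j 0 = 1) ∧
      (∀ i, ∑ j, x i j 1 = (∑ j, A i j) - 1) ∧
      (∀ j, ∑ i, x i j 1 = (∑ i, A i j) - 1) ∧
      (∀ i j, x i j 0 = S i j)) ↔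
    (∀ i, ∑ j, S i j = 1) ∧ (∀ j, ∑ i, S i j = 1) ∧ ∀ i j, S i j ≤ A i j := by
  constructor
  · rintro ⟨x, hsum, hrow, hcol, -, -, hS⟩
    simp only [← hS]
    refine ⟨hrow, hcol, fun i j => ?_⟩
    rw [← hsum, Fin.sum_univ_two]
    exact Nat.le_add_right _ _
  · rintro ⟨hrow, hcol, hle⟩
    refine ⟨fun i j => ![S i j, A i j - S i j], fun i j => ?_, hrow, hcol, fun i => ?_,
      fun j => ?_, fun _ _ => rfl⟩
    · simp [Fin.sum_univ_two, Nat.add_sub_cancel' (hle i j)]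
    · simp [sum_tsub_distrib _ fun j _ => hle i j, hrow]
    · simp [sum_tsub_distrib _ fun i _ => hle i j, hcol]

variable [DecidableEq ι]

theorem exists_eq_ite_of_sum_eq_one {f : ι → ℕ} (h : ∑ j, f j = 1) :
    ∃ j₀, ∀ j, f j = if j₀ = j then 1 else 0 := by
  obtain ⟨j₀, hj₀⟩ : ∃ j₀, f j₀ ≠ 0 := by
    by_contra! h0
    simp [h0] at h
  refine ⟨j₀, fun j => ?_⟩
  have hsplit : f j₀ + ∑ k ∈ univ.erase j₀, f k = 1 := by rwa [add_sum_erase _ _ (mem_univ j₀)]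
  split_ifs with hj
  · subst hj
    omega
  · have : f j ≤ ∑ k ∈ univ.erase j₀, f k :=
      single_le_sum (fun _ _ => Nat.zero_le _) (mem_erase.mpr ⟨Ne.symm hj, mem_univ j⟩)
    omega

theorem exists_perm_of_row_col_sums_eq_one {S : ι → ι → ℕ}
    (hrow : ∀ i, ∑ j, S i j = 1) (hcol : ∀ j, ∑ i, S i j = 1) :
    ∃ σ : Equiv.Perm ι, ∀ i j, S i j = if σ i = j then 1 else 0 := by
  choose f hf using fun i => exists_eq_ite_of_sum_eq_one (hrow i)
  choose g hg using fun j => exists_eq_ite_of_sum_eq_one (hcol j)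
  -- Reading `S i j` through its row and through its column: `f i = j ↔ g j = i`.
  have hfg : ∀ i j, f i = j ↔ g j = i := fun i j => by
    have := (hf i j).symm.trans (hg j i)
    split_ifs at this <;> simp_all
  exact ⟨⟨f, g, fun i => (hfg i _).mp rfl, fun j => (hfg _ j).mpr rfl⟩, hf⟩

theorem line_sums_eq_one_and_le_iff_exists_perm {A : ι → ι → ℕ} (hA : ∀ i j, A i j ≤ 1)
    (S : ι → ι → ℕ) :
    ((∀ i, ∑ j, S i j = 1) ∧ (∀ j, ∑ i, S i j = 1) ∧ ∀ i j, S i j ≤ A i j) ↔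
    ∃ σ : Equiv.Perm ι, (∀ i, A i (σ i) = 1) ∧ ∀ i j, S i j = if σ i = j then 1 else 0 := by
  constructor
  · rintro ⟨hrow, hcol, hle⟩
    obtain ⟨σ, hσ⟩ := exists_perm_of_row_col_sums_eq_one hrow hcol
    refine ⟨σ, fun i => le_antisymm (hA i (σ i)) ?_, hσ⟩
    simpa [hσ] using hle i (σ i)
  · rintro ⟨σ, hAσ, hσ⟩
    simp only [hσ]
    refine ⟨fun i => by simp, fun j => by simp [← Equiv.eq_symm_apply], fun i j => ?_⟩
    split_ifs with h
    · exact h ▸ (hAσ i).ge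
    · exact Nat.zero_le _

end

theorem slice_iff_permutation_matrix (n : ℕ) (A : Fin n → Fin n → ℕ)
    (hA : ∀ i j, A i j ≤ 1)
    (S : Fin n → Fin n → ℕ) :
    (∃ x : Fin n → Fin n → Fin 2 → ℕ,
      (∀ i j, ∑ k, x i j k = A i j) ∧
      (∀ i, ∑ j, x i j 0 = 1) ∧
      (∀ j, ∑ i, x i j 0 = 1) ∧
      (∀ i, ∑ j, x i j 1 = (∑ j, A i j) - 1) ∧
      (∀ j, ∑ i, x i j 1 = (∑ i, A i j) - 1) ∧
      (∀ i j, x i j 0 = S i j)) ↔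
    (∃ σ : Equiv.Perm (Fin n),
      (∀ i, A i (σ i) = 1) ∧
      (∀ i j, S i j = if σ i = j then 1 else 0)) :=
  (exists_table_with_marginals_iff A S).trans (line_sums_eq_one_and_le_iff_exists_perm hA S)
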